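/- Let ε ∈ (0,1) and suppose Λ < exp((ε²/6)·H_Σ/H_max), where H_max = max_{i∈[n]} H_i. Then there exists an integer shift vector τ ∈ ℤ^n with I_max(τ) ≤ ((1+ε)/2)·Σ_{i=1}^n H_i·(1 + 1/T_i); in particular, OPT^disc ≤ ((1+ε)/2)·Σ_{i=1}^n H_i·(1 + 1/T_i). -/

import Mathlib

noncomputable def invLevel (T H : ℕ) (τ t : ℤ) : ℝ :=
  (H : ℝ) * (1 - (((t - τ) % (T : ℤ) : ℤ) : ℝ) / (T : ℝ))

noncomputable def totalInv {ι : Type*} [Fintype ι] (T H : ι → ℕ) (τ : ι → ℤ) (t : ℤ) : ℝ :=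
  ∑ i, invLevel (T i) (H i) (τ i) t

def cycleLen {ι : Type*} [Fintype ι] (T : ι → ℕ) : ℕ := Finset.univ.lcm T

noncomputable def Imax {ι : Type*} [Fintype ι] (T H : ι → ℕ) (τ : ι → ℤ) : ℝ :=
  sSup (totalInv T H τ '' Set.Ico (0 : ℤ) (cycleLen T : ℤ))

noncomputable def OPTdisc {ι : Type*} [Fintype ι] (T H : ι → ℕ) : ℝ :=
  sInf (Set.range (Imax T H))

/-!
Draw each shift `τ i` uniformly from `{0, …, T i - 1}`, independently. At a fixed time `t` the
levels `I_i(τ_i, t) / H_max` are then independent `[0, 1]`-valued variables whose means add up to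
`Σ H_i (1 + 1/T_i) / (2 H_max) ≥ H_Σ / (2 H_max)`, so the multiplicative Chernoff bound makes the
peak condition fail at `t` with probability at most `exp (-(ε²/6) H_Σ / H_max) < 1 / Λ`. A union
bound over the `Λ` times of a cycle leaves a good shift vector. Probabilities are replaced by
counting over the finite box of shift vectors.
-/

open Finset Real
open scoped BigOperators

lemma exp_mul_le_one_add_mul (l : ℝ) {x : ℝ} (h0 : 0 ≤ x) (h1 : x ≤ 1) :
    exp (l * x) ≤ 1 + (exp l - 1) * x := by
  have := convexOn_exp.2 (Set.mem_univ 0) (Set.mem_univ l) (sub_nonneg.2 h1) h0 (by ring)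
  simp only [smul_eq_mul, mul_zero, zero_add, exp_zero, mul_one] at this
  rw [mul_comm l]
  linarith

lemma exp_two_mul_div_three_le {ε : ℝ} (h0 : 0 ≤ ε) (h1 : ε ≤ 3 / 2) :
    exp (2 * ε / 3) ≤ 1 + 2 * ε / 3 + ε ^ 2 / 3 := by
  have := exp_bound' (x := 2 * ε / 3) (by positivity) (by linarith) (n := 2) two_pos
  norm_num [sum_range_succ, Nat.factorial] at this
  linarith

lemma sum_exp_mul_le_card_mul_exp_expect {α : Type*} {s : Finset α} {f : α → ℝ}
    (hf : ∀ x ∈ s, f x ∈ Set.Icc (0 : ℝ) 1) (l : ℝ) :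
    ∑ x ∈ s, exp (l * f x) ≤ #s * exp ((exp l - 1) * 𝔼 x ∈ s, f x) :=
  calc ∑ x ∈ s, exp (l * f x)
      ≤ ∑ x ∈ s, (1 + (exp l - 1) * f x) :=
        sum_le_sum fun x hx => exp_mul_le_one_add_mul l (hf x hx).1 (hf x hx).2
    _ = #s * (1 + (exp l - 1) * 𝔼 x ∈ s, f x) := by
        rw [sum_add_distrib, sum_const, nsmul_one, ← mul_sum, ← card_mul_expect s f]; ring
    _ ≤ #s * exp ((exp l - 1) * 𝔼 x ∈ s, f x) := by
        gcongr; linarith [add_one_le_exp ((exp l - 1) * 𝔼 x ∈ s, f x)]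

lemma card_filter_mul_exp_le_sum_exp {Ω : Type*} (s : Finset Ω) (g : Ω → ℝ) {l : ℝ} (hl : 0 ≤ l)
    (a : ℝ) : #{ω ∈ s | a ≤ g ω} * exp (l * a) ≤ ∑ ω ∈ s, exp (l * g ω) :=
  calc #{ω ∈ s | a ≤ g ω} * exp (l * a)
      ≤ ∑ ω ∈ s with a ≤ g ω, exp (l * g ω) := by
        rw [← nsmul_eq_mul]
        exact card_nsmul_le_sum _ _ _ fun ω hω => by gcongr; exact (mem_filter.1 hω).2
    _ ≤ ∑ ω ∈ s, exp (l * g ω) :=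
        sum_le_sum_of_subset_of_nonneg (filter_subset _ _) fun _ _ _ => (exp_pos _).le

section Chernoff

variable {ι : Type*} [Fintype ι] [DecidableEq ι] {α : ι → Type*} {s : ∀ i, Finset (α i)}
  {f : ∀ i, α i → ℝ}

lemma sum_piFinset_exp_mul_sum_le (hf : ∀ i, ∀ x ∈ s i, f i x ∈ Set.Icc (0 : ℝ) 1) (l : ℝ) :
    ∑ ω ∈ Fintype.piFinset s, exp (l * ∑ i, f i (ω i))
      ≤ #(Fintype.piFinset s) * exp ((exp l - 1) * ∑ i, 𝔼 x ∈ s i, f i x) :=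
  calc ∑ ω ∈ Fintype.piFinset s, exp (l * ∑ i, f i (ω i))
      = ∏ i, ∑ x ∈ s i, exp (l * f i x) := by
        simp only [mul_sum, exp_sum, prod_univ_sum]
    _ ≤ ∏ i, (#(s i) * exp ((exp l - 1) * 𝔼 x ∈ s i, f i x)) :=
        prod_le_prod (fun i _ => sum_nonneg fun _ _ => (exp_pos _).le)
          fun i _ => sum_exp_mul_le_card_mul_exp_expect (hf i) l
    _ = #(Fintype.piFinset s) * exp ((exp l - 1) * ∑ i, 𝔼 x ∈ s i, f i x) := by
        rw [prod_mul_distrib, Fintype.card_piFinset, Nat.cast_prod, mul_sum, exp_sum]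

/-- The multiplicative Chernoff bound, counting version: `f i (ω i)` are independent `[0, 1]`-valued
random variables when `ω` is uniform on `piFinset s`. -/
theorem card_filter_one_add_mul_le_sum_le (hf : ∀ i, ∀ x ∈ s i, f i x ∈ Set.Icc (0 : ℝ) 1)
    {ε : ℝ} (hε0 : 0 ≤ ε) (hε1 : ε ≤ 3 / 2) :
    (#{ω ∈ Fintype.piFinset s | (1 + ε) * ∑ i, 𝔼 x ∈ s i, f i x ≤ ∑ i, f i (ω i)} : ℝ)
      ≤ #(Fintype.piFinset s) * exp (-(ε ^ 2 * (∑ i, 𝔼 x ∈ s i, f i x) / 3)) := by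
  have hmarkov := (card_filter_mul_exp_le_sum_exp (Fintype.piFinset s) (fun ω => ∑ i, f i (ω i))
    (by positivity : 0 ≤ 2 * ε / 3) ((1 + ε) * ∑ i, 𝔼 x ∈ s i, f i x)).trans
    (sum_piFinset_exp_mul_sum_le hf _)
  rw [← le_div_iff₀ (exp_pos _), mul_div_assoc, ← exp_sub] at hmarkov
  set μ := ∑ i, 𝔼 x ∈ s i, f i x
  have hμ : 0 ≤ μ := sum_nonneg fun i _ => expect_nonneg fun x hx => (hf i x hx).1
  have hexp : (exp (2 * ε / 3) - 1) * μ - 2 * ε / 3 * ((1 + ε) * μ) ≤ -(ε ^ 2 * μ / 3) := by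
    nlinarith [mul_le_mul_of_nonneg_right (exp_two_mul_div_three_le hε0 hε1) hμ]
  exact hmarkov.trans (mul_le_mul_of_nonneg_left (exp_le_exp.2 hexp) (Nat.cast_nonneg _))

end Chernoff

lemma exists_forall_not_of_card_mul_lt {Ω β : Type*} (S : Finset Ω) (T : Finset β)
    (P : β → Ω → Prop) [∀ t, DecidablePred (P t)] {B : ℝ}
    (hB : ∀ t ∈ T, (#{ω ∈ S | P t ω} : ℝ) ≤ B) (hlt : #T * B < #S) :
    ∃ ω ∈ S, ∀ t ∈ T, ¬ P t ω := by
  classical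
  by_contra! h
  have hcover : S ⊆ T.biUnion fun t => {ω ∈ S | P t ω} := fun ω hω => by
    obtain ⟨t, ht, hP⟩ := h ω hω
    exact mem_biUnion.2 ⟨t, ht, mem_filter.2 ⟨hω, hP⟩⟩
  have : (#S : ℝ) ≤ #T * B :=
    calc (#S : ℝ) ≤ ∑ t ∈ T, (#{ω ∈ S | P t ω} : ℝ) := by
          exact_mod_cast (card_le_card hcover).trans card_biUnion_le
      _ ≤ #T * B := by simpa using sum_le_sum hB
  linarith

lemma emod_sub_emod_sub_self (t a n : ℤ) : (t - (t - a) % n) % n = a % n := by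
  rw [Int.sub_emod, Int.emod_emod, ← Int.sub_emod, sub_sub_cancel]

lemma sum_Ico_emod_sub {M : Type*} [AddCommMonoid M] (f : ℤ → M) (T : ℕ) (t : ℤ) :
    ∑ τ ∈ Ico (0 : ℤ) T, f ((t - τ) % T) = ∑ r ∈ range T, f r := by
  have hmod : ∀ a : ℤ, 0 < T → 0 ≤ a % T ∧ a % T < T := fun a hT =>
    ⟨Int.emod_nonneg _ (by omega), Int.emod_lt_of_pos _ (by omega)⟩
  refine sum_nbij' (fun τ => ((t - τ) % T).toNat) (fun r => (t - r) % T) ?_ ?_ ?_ ?_ ?_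
  · intro τ hτ
    simp only [mem_Ico] at hτ
    have := hmod (t - τ) (by omega)
    simp only [mem_range]; omega
  · intro r hr
    simp only [mem_range] at hr
    have := hmod (t - r) (by omega)
    simp only [mem_Ico]; omega
  · intro τ hτ
    simp only [mem_Ico] at hτ
    rw [Int.toNat_of_nonneg (hmod _ (by omega)).1, emod_sub_emod_sub_self,
      Int.emod_eq_of_lt hτ.1 hτ.2]
  · intro r hr
    simp only [mem_range] at hr
    rw [emod_sub_emod_sub_self, Int.emod_eq_of_lt (by omega) (by omega), Int.toNat_natCast]
  · intro τ hτ
    simp only [mem_Ico] at hτ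
    rw [Int.toNat_of_nonneg (hmod _ (by omega)).1]

lemma sum_range_natCast_mul_two (T : ℕ) : (∑ r ∈ range T, (r : ℝ)) * 2 = T * (T - 1) := by
  induction T with
  | zero => simp
  | succ k ih => rw [sum_range_succ, add_mul, ih]; push_cast; ring

lemma invLevel_nonneg (T H : ℕ) (τ t : ℤ) : 0 ≤ invLevel T H τ t := by
  rcases Nat.eq_zero_or_pos T with rfl | hT
  · simp [invLevel]
  · have hlt : (t - τ) % (T : ℤ) < T := Int.emod_lt_of_pos _ (by omega)
    have : (((t - τ) % (T : ℤ) : ℤ) : ℝ) / T ≤ 1 := by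
      rw [div_le_one (by positivity)]; exact_mod_cast hlt.le
    have := sub_nonneg.2 this
    unfold invLevel
    positivity

lemma invLevel_le (T H : ℕ) (τ t : ℤ) : invLevel T H τ t ≤ H := by
  rcases Nat.eq_zero_or_pos T with rfl | hT
  · simp [invLevel]
  · have : (0 : ℝ) ≤ (((t - τ) % (T : ℤ) : ℤ) : ℝ) / T := by
      have := Int.emod_nonneg (t - τ) (b := T) (by omega); positivity
    unfold invLevel
    nlinarith [(Nat.cast_nonneg H : (0 : ℝ) ≤ H)]

lemma expect_Ico_invLevel {T : ℕ} (hT : 0 < T) (H : ℕ) (t : ℤ) :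
    𝔼 τ ∈ Ico (0 : ℤ) T, invLevel T H τ t = H * (1 + 1 / T) / 2 := by
  have hT' : (T : ℝ) ≠ 0 := by positivity
  unfold invLevel
  rw [expect_eq_sum_div_card, Int.card_Ico, sub_zero, Int.toNat_natCast,
    sum_Ico_emod_sub (fun r : ℤ => (H : ℝ) * (1 - (r : ℝ) / T)), ← mul_sum, sum_sub_distrib,
    ← sum_div]
  simp only [Int.cast_natCast, sum_const, card_range, nsmul_eq_mul, mul_one]
  have := sum_range_natCast_mul_two T
  field_simp
  linear_combination (-(H : ℝ)) * this

lemma exists_shift_forall_totalInv_lt {ι : Type*} [Fintype ι] [DecidableEq ι] (T H : ι → ℕ)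
    (hT : ∀ i, 0 < T i) {c : ℝ} (hc : 0 < c) (hHc : ∀ i, (H i : ℝ) ≤ c) {ε : ℝ} (hε0 : 0 ≤ ε)
    (hε1 : ε ≤ 3 / 2) (ts : Finset ℤ)
    (hts : (#ts : ℝ) < exp (ε ^ 2 / 6 * ((∑ i, (H i : ℝ)) / c))) :
    ∃ τ : ι → ℤ, ∀ t ∈ ts,
      totalInv T H τ t < (1 + ε) / 2 * ∑ i, (H i : ℝ) * (1 + 1 / T i) := by
  set M := ∑ i, (H i : ℝ) * (1 + 1 / T i)
  set S := Fintype.piFinset fun i => Ico (0 : ℤ) (T i)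
  have hf (t : ℤ) (i : ι) (τ : ℤ) (_ : τ ∈ Ico (0 : ℤ) (T i)) :
      invLevel (T i) (H i) τ t / c ∈ Set.Icc (0 : ℝ) 1 :=
    ⟨div_nonneg (invLevel_nonneg _ _ _ _) hc.le,
      (div_le_one hc).2 ((invLevel_le _ _ _ _).trans (hHc i))⟩
  have hmean (t : ℤ) :
      ∑ i, 𝔼 τ ∈ Ico (0 : ℤ) (T i), invLevel (T i) (H i) τ t / c = M / 2 / c := by
    simp only [← expect_div, expect_Ico_invLevel (hT _), M, sum_div]
  have hS : (0 : ℝ) < #S := by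
    exact_mod_cast card_pos.2 <|
      Fintype.piFinset_nonempty.2 fun i => nonempty_Ico.2 (by exact_mod_cast hT i)
  have hHM : ∑ i, (H i : ℝ) ≤ M := sum_le_sum fun i _ =>
    le_mul_of_one_le_right (Nat.cast_nonneg _) (le_add_of_nonneg_right (by positivity))
  have hts' : (#ts : ℝ) < exp (ε ^ 2 * (M / 2 / c) / 3) :=
    hts.trans_le <| exp_le_exp.2 <| calc
      ε ^ 2 / 6 * ((∑ i, (H i : ℝ)) / c) ≤ ε ^ 2 / 6 * (M / c) := by gcongr
      _ = ε ^ 2 * (M / 2 / c) / 3 := by ring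
  obtain ⟨ω, -, hω⟩ := exists_forall_not_of_card_mul_lt S ts
    (fun t ω => (1 + ε) * (M / 2 / c) ≤ ∑ i, invLevel (T i) (H i) (ω i) t / c)
    (B := #S * exp (-(ε ^ 2 * (M / 2 / c) / 3)))
    (fun t _ => by simpa only [hmean t] using card_filter_one_add_mul_le_sum_le (hf t) hε0 hε1)
    (calc #ts * (#S * exp (-(ε ^ 2 * (M / 2 / c) / 3)))
        = #S * (#ts / exp (ε ^ 2 * (M / 2 / c) / 3)) := by rw [exp_neg]; ring
      _ < #S * 1 := mul_lt_mul_of_pos_left ((div_lt_one (exp_pos _)).2 hts') hS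
      _ = #S := mul_one _)
  refine ⟨ω, fun t ht => ?_⟩
  have := not_le.1 (hω t ht)
  rw [← sum_div, div_lt_iff₀ hc] at this
  calc totalInv T H ω t < (1 + ε) * (M / 2 / c) * c := this
    _ = (1 + ε) / 2 * M := by field_simp

section Peak

variable {ι : Type*} [Fintype ι] (T H : ι → ℕ)

lemma cycleLen_pos (hT : ∀ i, 0 < T i) : 0 < cycleLen T :=
  Nat.pos_of_ne_zero <| by simp [cycleLen, Finset.lcm_eq_zero_iff, (hT _).ne']

lemma Imax_nonneg (τ : ι → ℤ) : 0 ≤ Imax T H τ :=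
  Real.sSup_nonneg <| by
    rintro _ ⟨t, -, rfl⟩
    exact sum_nonneg fun i _ => invLevel_nonneg _ _ _ _

lemma OPTdisc_le_Imax (τ : ι → ℤ) : OPTdisc T H ≤ Imax T H τ :=
  csInf_le ⟨0, by rintro _ ⟨σ, rfl⟩; exact Imax_nonneg T H σ⟩ ⟨τ, rfl⟩

end Peak

theorem stmt3_general {n : ℕ} (T H : Fin n → ℕ) (hT : ∀ i, 0 < T i)
    (ε : ℝ) (hε : ε ∈ Set.Ioo (0 : ℝ) 1)
    (hΛ : (cycleLen T : ℝ)
      < Real.exp ((ε ^ 2 / 6) * ((∑ i, (H i : ℝ)) / ((Finset.univ.sup H : ℕ) : ℝ)))) :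
    (∃ τ : Fin n → ℤ,
      Imax T H τ ≤ ((1 + ε) / 2) * ∑ i, (H i : ℝ) * (1 + 1 / (T i : ℝ))) ∧
    OPTdisc T H ≤ ((1 + ε) / 2) * ∑ i, (H i : ℝ) * (1 + 1 / (T i : ℝ)) := by
  obtain ⟨hε0, hε1⟩ := hε
  have hc : (0 : ℝ) < univ.sup H := by
    refine (Nat.cast_nonneg _).lt_of_ne fun hc0 => ?_
    rw [← hc0, div_zero, mul_zero, exp_zero, Nat.cast_lt_one] at hΛ
    exact (cycleLen_pos T hT).ne' hΛ
  obtain ⟨τ, hτ⟩ := exists_shift_forall_totalInv_lt T H hT hc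
    (fun i => by exact_mod_cast le_sup (f := H) (mem_univ i)) hε0.le (by linarith)
    (Ico 0 (cycleLen T)) (by simpa using hΛ)
  have hImax : Imax T H τ ≤ (1 + ε) / 2 * ∑ i, (H i : ℝ) * (1 + 1 / T i) :=
    Real.sSup_le (by rintro _ ⟨t, ht, rfl⟩; exact (hτ t (by simpa using ht)).le) (by positivity)
  exact ⟨⟨τ, hImax⟩, (OPTdisc_le_Imax T H τ).trans hImax⟩

/-- If `Λ < exp((ε²/6)·H_Σ/H_max)`, then some integer shift vector has peak inventory
level at most `((1+ε)/2)·Σ H_i(1+1/T_i)`; in particular `OPT^disc` is at most this. -/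
theorem stmt3 {n : ℕ} (hn : 0 < n) (T H : Fin n → ℕ) (hT : ∀ i, 0 < T i)
    (hH : ∀ i, 0 < H i) (ε : ℝ) (hε : ε ∈ Set.Ioo (0 : ℝ) 1)
    (hΛ : (cycleLen T : ℝ)
      < Real.exp ((ε ^ 2 / 6) * ((∑ i, (H i : ℝ)) / ((Finset.univ.sup H : ℕ) : ℝ)))) :
    (∃ τ : Fin n → ℤ,
      Imax T H τ ≤ ((1 + ε) / 2) * ∑ i, (H i : ℝ) * (1 + 1 / (T i : ℝ))) ∧
    OPTdisc T H ≤ ((1 + ε) / 2) * ∑ i, (H i : ℝ) * (1 + 1 / (T i : ℝ)) :=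
  stmt3_general T H hT ε hε hΛ
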